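/- arXiv:1609.00069 — 3 statements merged into one kernel-verified Lean document; each statement's English description precedes it below -/
import Mathlib

section
/- For every positive integer k and every n ≥ 9k², the rainbow Turán number of the matching with k edges satisfies ex*(n, M_k) = C(k−1, 2) + (k−1)(n−k+1), where C(k−1,2) denotes the binomial coefficient (k−1 choose 2). -/
open SimpleGraph Finset

/-- `c` is a proper edge-coloring of `G`: distinct edges sharing a vertex get distinct colors. -/
def IsProperEdgeColoring {V β : Type*} (G : SimpleGraph V) (c : Sym2 V → β) : Prop :=
  ∀ ⦃e₁ e₂ : Sym2 V⦄, e₁ ∈ G.edgeSet → e₂ ∈ G.edgeSet → e₁ ≠ e₂ →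
    (∃ v, v ∈ e₁ ∧ v ∈ e₂) → c e₁ ≠ c e₂

/-- `G` contains a copy of `F` (as a subgraph). -/
def Contains {α V : Type*} (F : SimpleGraph α) (G : SimpleGraph V) : Prop :=
  ∃ f : α ↪ V, ∀ ⦃a b⦄, F.Adj a b → G.Adj (f a) (f b)

/-- `G`, edge-colored by `c`, contains a rainbow copy of `F`:
a copy of `F` all of whose edges receive distinct colors. -/
def HasRainbowCopy {α V β : Type*} (F : SimpleGraph α) (G : SimpleGraph V)
    (c : Sym2 V → β) : Prop :=
  ∃ f : α ↪ V, (∀ ⦃a b⦄, F.Adj a b → G.Adj (f a) (f b)) ∧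
    ∀ e₁ ∈ F.edgeSet, ∀ e₂ ∈ F.edgeSet, c (e₁.map ⇑f) = c (e₂.map ⇑f) → e₁ = e₂

/-- The set of edge-counts of `n`-vertex graphs admitting a proper edge-coloring
with no rainbow copy of `F`; its greatest element is the rainbow Turán number `ex*(n,F)`. -/
def rainbowExSet (n : ℕ) {α : Type*} (F : SimpleGraph α) : Set ℕ :=
  {m | ∃ (G : SimpleGraph (Fin n)) (c : Sym2 (Fin n) → ℕ),
    IsProperEdgeColoring G c ∧ ¬ HasRainbowCopy F G c ∧ G.edgeSet.ncard = m}

/-- The set of edge-counts of `n`-vertex `F`-free graphs; its greatest element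
is the Turán number `ex(n,F)`. -/
def exSet (n : ℕ) {α : Type*} (F : SimpleGraph α) : Set ℕ :=
  {m | ∃ G : SimpleGraph (Fin n), ¬ Contains F G ∧ G.edgeSet.ncard = m}

/-- The matching `M_k` with `k` edges: vertices `2i` and `2i+1` are matched. -/
def matchingGraph (k : ℕ) : SimpleGraph (Fin (2 * k)) :=
  SimpleGraph.fromRel (fun a b => (a : ℕ) / 2 = (b : ℕ) / 2)

/-- The forest of `k` vertex-disjoint stars where the `i`-th star has `a i` edges
(the vertex `⟨i, 0⟩` being the center of the `i`-th star). -/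
def starForest {k : ℕ} (a : Fin k → ℕ) : SimpleGraph (Σ i, Fin (a i + 1)) :=
  SimpleGraph.fromRel (fun x y => x.1 = y.1 ∧ (x.2 : ℕ) = 0)

/-!
The lower bound is the graph of all pairs meeting a fixed set `s` of `k - 1` vertices, colored
injectively: the `k` disjoint edges of a copy of `M_k` would need `k` distinct vertices of `s`.

For the upper bound let `X` be the set of vertices of degree at least `3k` and `H` the graph of
edges of `G` avoiding `X`. A vertex of `X` has enough neighbors to be matched greedily to a fresh
vertex by an edge of a fresh color, so a rainbow matching of `H` with `t` edges extends to one of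
`G` with `|X| + t` edges; hence `|X| + t < k` for a maximum rainbow matching of `H`. The edges of
`H` meeting this matching number at most `2t · 3k`, and every other edge of `H` repeats one of its
`t` colors, a color class having at most `n / 2` edges. Thus
`e(G) ≤ C(|X|, 2) + |X| (n - |X|) + t (6k + n / 2)`, which is at most
`C(k - 1, 2) + (k - 1)(n - k + 1)` once `n ≥ 9k²`.
-/

variable {V β : Type*}

theorem Nat.two_mul_choose_two (a : ℕ) : 2 * a.choose 2 = a * (a - 1) := by
  rw [Nat.choose_two_right, mul_comm, Nat.div_two_mul_two_of_even (Nat.even_mul_pred_self a)]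

namespace SimpleGraph

/-- The largest graph on `V` having `s` as a vertex cover. -/
def coverGraph (s : Finset V) : SimpleGraph V := fromRel fun u _ => u ∈ s

instance [DecidableEq V] (s : Finset V) : DecidableRel (coverGraph s).Adj :=
  inferInstanceAs (DecidableRel (fromRel fun u (_ : V) => u ∈ s).Adj)

@[simp]
theorem coverGraph_adj {s : Finset V} {u v : V} :
    (coverGraph s).Adj u v ↔ u ≠ v ∧ (u ∈ s ∨ v ∈ s) :=
  fromRel_adj _ u v

theorem isVertexCover_coverGraph (s : Finset V) : (coverGraph s).IsVertexCover s :=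
  fun _ _ h => (coverGraph_adj.1 h).2

theorem mem_edgeSet_coverGraph {s : Finset V} {e : Sym2 V} (he : ¬ e.IsDiag) :
    e ∈ (coverGraph s).edgeSet ↔ ∃ v ∈ e, v ∈ s := by
  induction e using Sym2.ind with
  | _ u v => simp_all

theorem card_edgeFinset_inf_coverGraph_le [Fintype V] [DecidableEq V] (G : SimpleGraph V)
    [DecidableRel G.Adj] (s : Finset V) :
    #(G ⊓ coverGraph s).edgeFinset ≤ ∑ v ∈ s, G.degree v := by
  calc #(G ⊓ coverGraph s).edgeFinset ≤ #(s.biUnion fun v => G.incidenceFinset v) := by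
        refine card_le_card fun e he => ?_
        rw [mem_edgeFinset, edgeSet_inf] at he
        obtain ⟨v, hve, hvs⟩ :=
          (mem_edgeSet_coverGraph (G.not_isDiag_of_mem_edgeSet he.1)).1 he.2
        exact mem_biUnion.2 ⟨v, hvs, (G.mem_incidenceFinset v e).2 ⟨he.1, hve⟩⟩
    _ ≤ ∑ v ∈ s, #(G.incidenceFinset v) := card_biUnion_le
    _ = ∑ v ∈ s, G.degree v := by simp only [card_incidenceFinset_eq_degree]

theorem card_edgeFinset_coverGraph [Fintype V] [DecidableEq V] (s : Finset V) :
    #(coverGraph s).edgeFinset = (#s).choose 2 + #s * (Fintype.card V - #s) := by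
  have hdeg : ∀ v, (coverGraph s).degree v = if v ∈ s then Fintype.card V - 1 else #s := by
    intro v
    rw [← card_neighborFinset_eq_degree]
    split_ifs with hv
    · rw [← card_univ, ← card_erase_of_mem (mem_univ v)]
      congr 1; ext w; simp [hv, eq_comm]
    · congr 1; ext w
      simp only [mem_neighborFinset, coverGraph_adj, hv, false_or]
      exact ⟨And.right, fun hw => ⟨fun h => hv (h ▸ hw), hw⟩⟩
  have hsum := (coverGraph s).sum_degrees_eq_twice_card_edges
  rw [← sum_add_sum_compl s, sum_congr rfl fun v hv => (hdeg v).trans (if_pos hv),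
    sum_congr rfl fun v hv => (hdeg v).trans (if_neg (mem_compl.1 hv)), sum_const, sum_const,
    card_compl, smul_eq_mul, smul_eq_mul] at hsum
  have hsplit : #s * (Fintype.card V - 1) = #s * (#s - 1) + #s * (Fintype.card V - #s) := by
    rcases Nat.eq_zero_or_pos #s with h0 | hpos
    · simp [h0]
    · rw [← mul_add]; congr 1; have := card_le_univ s; omega
  linarith [Nat.two_mul_choose_two #s, mul_comm (Fintype.card V - #s) #s]

end SimpleGraph

theorem Sym2.coe_toFinset [DecidableEq V] (e : Sym2 V) : (e.toFinset : Set V) = e := by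
  ext; simp

theorem Set.PairwiseDisjoint.sym2_toFinset [DecidableEq V] {M : Set (Sym2 V)}
    (hM : M.PairwiseDisjoint SetLike.coe) : M.PairwiseDisjoint Sym2.toFinset :=
  fun e he f hf hne => by
    rw [Function.onFun, ← Finset.disjoint_coe, Sym2.coe_toFinset, Sym2.coe_toFinset]
    exact hM he hf hne

theorem card_biUnion_toFinset [DecidableEq V] {G : SimpleGraph V} {M : Finset (Sym2 V)}
    (hMG : (M : Set (Sym2 V)) ⊆ G.edgeSet)
    (hM : (M : Set (Sym2 V)).PairwiseDisjoint SetLike.coe) :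
    #(M.biUnion Sym2.toFinset) = 2 * #M := by
  rw [card_biUnion hM.sym2_toFinset, sum_congr rfl fun e he =>
    Sym2.card_toFinset_of_not_isDiag e (G.not_isDiag_of_mem_edgeSet (hMG he)), sum_const,
    smul_eq_mul, mul_comm]

namespace IsProperEdgeColoring

variable {G H : SimpleGraph V} {c : Sym2 V → β}

theorem mono (hc : IsProperEdgeColoring G c) (hHG : H ≤ G) : IsProperEdgeColoring H c :=
  fun _ _ h₁ h₂ => hc (edgeSet_mono hHG h₁) (edgeSet_mono hHG h₂)

theorem injOn_neighborSet (hc : IsProperEdgeColoring G c) (v : V) :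
    (G.neighborSet v).InjOn fun w => c s(v, w) := by
  intro w hw w' hw' hcol
  by_contra hne
  exact hc hw hw' (fun h => hne (Sym2.congr_right.1 h))
    ⟨v, Sym2.mem_mk_left v w, Sym2.mem_mk_left v w'⟩ hcol

theorem pairwiseDisjoint_colorClass (hc : IsProperEdgeColoring G c) (γ : β) :
    {e ∈ G.edgeSet | c e = γ}.PairwiseDisjoint SetLike.coe := by
  intro e he f hf hne
  rw [Function.onFun, Set.disjoint_left]
  exact fun v hve hvf => hc he.1 hf.1 hne ⟨v, hve, hvf⟩ (he.2.trans hf.2.symm)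

theorem two_mul_card_colorClass_le [Fintype V] [DecidableEq V] [DecidableEq β]
    [DecidableRel G.Adj] (hc : IsProperEdgeColoring G c) (γ : β) :
    2 * #{e ∈ G.edgeFinset | c e = γ} ≤ Fintype.card V := by
  rw [← card_biUnion_toFinset (G := G) (fun e he => by simp_all)
    (by simpa using hc.pairwiseDisjoint_colorClass γ)]
  exact card_le_univ _

end IsProperEdgeColoring

structure IsRainbowMatching (G : SimpleGraph V) (c : Sym2 V → β) (M : Finset (Sym2 V)) :
    Prop where
  subset_edgeSet : (M : Set (Sym2 V)) ⊆ G.edgeSet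
  pairwiseDisjoint : (M : Set (Sym2 V)).PairwiseDisjoint SetLike.coe
  injOn : Set.InjOn c M

namespace IsRainbowMatching

variable {G G' : SimpleGraph V} {c : Sym2 V → β} {M M' : Finset (Sym2 V)}

theorem empty : IsRainbowMatching G c ∅ := ⟨by simp, by simp, by simp⟩

theorem mono (hM : IsRainbowMatching G c M) (hGG' : G ≤ G') : IsRainbowMatching G' c M :=
  ⟨hM.subset_edgeSet.trans (edgeSet_mono hGG'), hM.pairwiseDisjoint, hM.injOn⟩

theorem subset (hM : IsRainbowMatching G c M) (hM' : M' ⊆ M) : IsRainbowMatching G c M' :=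
  ⟨(coe_subset.2 hM').trans hM.subset_edgeSet, hM.pairwiseDisjoint.subset (coe_subset.2 hM'),
    hM.injOn.mono (coe_subset.2 hM')⟩

theorem insert [DecidableEq (Sym2 V)] (hM : IsRainbowMatching G c M) {e : Sym2 V}
    (he : e ∈ G.edgeSet) (hfree : ∀ f ∈ M, Disjoint (e : Set V) f)
    (hcol : ∀ f ∈ M, c f ≠ c e) :
    IsRainbowMatching G c (insert e M) := by
  have heM : e ∉ M := fun h => hcol e h rfl
  refine ⟨?_, ?_, ?_⟩
  · rw [coe_insert]; exact Set.insert_subset he hM.subset_edgeSet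
  · rw [coe_insert]
    exact hM.pairwiseDisjoint.insert fun f hf _ => hfree f hf
  · rw [coe_insert, Set.injOn_insert (mem_coe.not.2 heM)]
    exact ⟨hM.injOn, fun ⟨f, hf, hcf⟩ => hcol f hf hcf⟩

end IsRainbowMatching

section matchingGraph

variable {k : ℕ}

theorem matchingGraph_adj {a b : Fin (2 * k)} :
    (matchingGraph k).Adj a b ↔ a ≠ b ∧ (a : ℕ) / 2 = b / 2 := by
  simp [matchingGraph, eq_comm (a := (b : ℕ) / 2)]

theorem matchingGraph_adj_two_mul (i : Fin k) :
    (matchingGraph k).Adj ⟨2 * i, by omega⟩ ⟨2 * i + 1, by omega⟩ :=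
  matchingGraph_adj.2 ⟨by simp [Fin.ext_iff], by simp only; omega⟩

theorem matchingGraph_sym2_eq {a b a' b' : Fin (2 * k)} (h : (matchingGraph k).Adj a b)
    (h' : (matchingGraph k).Adj a' b') (ha : (a : ℕ) / 2 = a' / 2) : s(a, b) = s(a', b') := by
  rw [matchingGraph_adj, ne_eq, Fin.ext_iff] at h h'
  rw [Sym2.eq_iff, Fin.ext_iff, Fin.ext_iff, Fin.ext_iff, Fin.ext_iff]
  omega

end matchingGraph

theorem IsRainbowMatching.hasRainbowCopy {G : SimpleGraph V} {c : Sym2 V → β}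
    {M : Finset (Sym2 V)} {k : ℕ} (hM : IsRainbowMatching G c M) (hk : #M = k) :
    HasRainbowCopy (matchingGraph k) G c := by
  let e : Fin k ≃ M := (Fintype.equivFinOfCardEq (by simp [hk])).symm
  let idx : Fin (2 * k) → Fin k := fun a => ⟨a / 2, by omega⟩
  -- vertices `2i` and `2i + 1` of `M_k` go to the two ends of the `i`-th edge of `M`
  let f : Fin (2 * k) → V := fun a =>
    if (a : ℕ) % 2 = 0 then (e (idx a) : Sym2 V).out.1 else (e (idx a) : Sym2 V).out.2
  have hf : ∀ ⦃a b⦄, (matchingGraph k).Adj a b → s(f a, f b) = e (idx a) := by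
    intro a b hab
    rw [matchingGraph_adj] at hab
    have hidx : idx b = idx a := Fin.ext hab.2.symm
    have hab' : (a : ℕ) ≠ b := fun h => hab.1 (Fin.ext h)
    rw [← Quot.out_eq (e (idx a) : Sym2 V)]
    simp only [f, hidx]
    split_ifs <;> first | omega | exact Sym2.eq_swap | rfl
  have hadj : ∀ ⦃a b⦄, (matchingGraph k).Adj a b → G.Adj (f a) (f b) := fun a b hab => by
    rw [← mem_edgeSet, hf hab]
    exact hM.subset_edgeSet (e (idx a)).2
  have hinj : Function.Injective f := by
    intro a b hfab
    by_contra hab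
    have hmem : ∀ a, f a ∈ (e (idx a) : Sym2 V) := fun a => by
      simp only [f]; split_ifs
      exacts [Sym2.out_fst_mem _, Sym2.out_snd_mem _]
    have hidx : idx a = idx b := by
      by_contra hne
      have hne' : (e (idx a) : Sym2 V) ≠ e (idx b) := fun h => hne (e.injective (Subtype.ext h))
      exact Set.disjoint_left.1 (hM.pairwiseDisjoint (e (idx a)).2 (e (idx b)).2 hne')
        (hmem a) (hfab ▸ hmem b)
    exact (hadj (matchingGraph_adj.2 ⟨hab, congrArg Fin.val hidx⟩)).ne hfab
  refine ⟨⟨f, hinj⟩, hadj, ?_⟩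
  intro e₁ he₁ e₂ he₂ hcol
  induction e₁ using Sym2.ind with | _ a b => ?_
  induction e₂ using Sym2.ind with | _ a' b' => ?_
  rw [mem_edgeSet] at he₁ he₂
  simp only [Sym2.map_mk, Function.Embedding.coeFn_mk, hf he₁, hf he₂] at hcol
  have := hM.injOn (e (idx a)).2 (e (idx a')).2 hcol
  exact matchingGraph_sym2_eq he₁ he₂ (congrArg Fin.val (e.injective (Subtype.ext this)))

theorem SimpleGraph.IsVertexCover.le_card_of_contains_matchingGraph {G : SimpleGraph V}
    {s : Finset V} (hs : G.IsVertexCover s) {k : ℕ} (hG : Contains (matchingGraph k) G) :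
    k ≤ #s := by
  classical
  obtain ⟨f, hf⟩ := hG
  let g : Fin k → Fin (2 * k) := fun i =>
    if f ⟨2 * i, by omega⟩ ∈ s then ⟨2 * i, by omega⟩ else ⟨2 * i + 1, by omega⟩
  have hgs : ∀ i, f (g i) ∈ s := fun i => by
    have := hs (hf (matchingGraph_adj_two_mul i))
    simp only [g]; split_ifs with h
    exacts [h, this.resolve_left h]
  have hg : ∀ i, (g i : ℕ) / 2 = i := fun i => by
    simp only [g]; split_ifs <;> simp only <;> omega
  have hinj : Function.Injective (f ∘ g) := fun i j hij =>
    Fin.ext ((hg i).symm.trans ((congrArg (fun a : Fin (2 * k) => (a : ℕ) / 2)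
      (f.injective hij)).trans (hg j)))
  simpa using card_le_card_of_injOn (s := univ) (f ∘ g) (fun i _ => hgs i) hinj.injOn

namespace IsRainbowMatching

variable [Fintype V] [DecidableEq V] {G : SimpleGraph V} [DecidableRel G.Adj] {c : Sym2 V → β}
  {M : Finset (Sym2 V)}

theorem exists_adj_fresh (hc : IsProperEdgeColoring G c) (hM : IsRainbowMatching G c M)
    (B : Finset V) {v : V} (hv : #B + 3 * #M < G.degree v) :
    ∃ w, G.Adj v w ∧ w ∉ B ∧ w ∉ M.biUnion Sym2.toFinset ∧
      ∀ e ∈ M, c e ≠ c s(v, w) := by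
  classical
  let clash := {w ∈ G.neighborFinset v | ∃ e ∈ M, c e = c s(v, w)}
  have hclash : #clash ≤ #M :=
    calc #clash ≤ #(M.image c) := by
          refine card_le_card_of_injOn (fun w => c s(v, w)) (fun w hw => ?_) ?_
          · obtain ⟨e, he, hce⟩ := (mem_filter.1 hw).2
            exact mem_image.2 ⟨e, he, hce⟩
          · exact (hc.injOn_neighborSet v).mono fun w hw =>
              (mem_neighborFinset _ _ _).1 (mem_filter.1 hw).1
      _ ≤ #M := card_image_le
  have hverts := card_biUnion_toFinset hM.subset_edgeSet hM.pairwiseDisjoint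
  obtain ⟨w, hw, hfresh⟩ := exists_mem_notMem_of_card_lt_card
    (s := B ∪ M.biUnion Sym2.toFinset ∪ clash) (t := G.neighborFinset v) <| by
      rw [card_neighborFinset_eq_degree]
      linarith [card_union_le (B ∪ M.biUnion Sym2.toFinset) clash,
        card_union_le B (M.biUnion Sym2.toFinset)]
  rw [mem_neighborFinset] at hw
  simp only [mem_union, not_or, clash, mem_filter, mem_neighborFinset, not_and,
    not_exists] at hfresh
  exact ⟨w, hw, hfresh.1.1, hfresh.1.2, fun e he h => hfresh.2 hw e he h⟩

theorem exists_card_eq_add_of_le_degree (hc : IsProperEdgeColoring G c) (Y : Finset V) :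
    ∀ {M : Finset (Sym2 V)}, IsRainbowMatching G c M → Disjoint Y (M.biUnion Sym2.toFinset) →
      (∀ v ∈ Y, 3 * (#M + #Y) ≤ G.degree v) →
      ∃ M', IsRainbowMatching G c M' ∧ #M' = #M + #Y := by
  induction Y using Finset.induction_on with
  | empty => exact fun hM _ _ => ⟨_, hM, rfl⟩
  | insert v Y hvY ih =>
    intro M hM hdisj hdeg
    rw [card_insert_of_notMem hvY] at hdeg
    obtain ⟨w, hvw, hwY, hwM, hcol⟩ :=
      exists_adj_fresh hc hM Y (lt_of_lt_of_le (by omega) (hdeg v (mem_insert_self v Y)))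
    have hvM : v ∉ M.biUnion Sym2.toFinset := disjoint_left.1 hdisj (mem_insert_self v Y)
    have hM' : IsRainbowMatching G c (Insert.insert s(v, w) M) := by
      refine hM.insert hvw (fun f hf => Set.disjoint_left.2 fun u hu huf => ?_) hcol
      have hu' : u ∈ M.biUnion Sym2.toFinset := mem_biUnion.2 ⟨f, hf, Sym2.mem_toFinset.2 huf⟩
      rcases Sym2.mem_iff.1 hu with rfl | rfl
      exacts [hvM hu', hwM hu']
    have hcard : #(Insert.insert s(v, w) M) = #M + 1 :=
      card_insert_of_notMem fun h => hcol _ h rfl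
    have hdisj' : Disjoint Y ((Insert.insert s(v, w) M).biUnion Sym2.toFinset) := by
      rw [biUnion_insert, Sym2.toFinset_mk_eq, disjoint_union_right]
      refine ⟨disjoint_left.2 fun u hu hu' => ?_, (disjoint_insert_left.1 hdisj).2⟩
      rcases mem_insert.1 hu' with rfl | hu'
      exacts [hvY hu, hwY (mem_singleton.1 hu' ▸ hu)]
    obtain ⟨M', hM'', hcard'⟩ := ih hM' hdisj' fun u hu => by
      rw [hcard]; linarith [hdeg u (mem_insert_of_mem hu)]
    exact ⟨M', hM'', by rw [hcard', hcard, card_insert_of_notMem hvY]; ring⟩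

theorem exists_card_eq_of_le_degree (hc : IsProperEdgeColoring G c)
    (hM : IsRainbowMatching G c M) {Y : Finset V} (hY : Disjoint Y (M.biUnion Sym2.toFinset))
    {k : ℕ} (hdeg : ∀ v ∈ Y, 3 * k ≤ G.degree v) (hk : k ≤ #M + #Y) :
    ∃ M', IsRainbowMatching G c M' ∧ #M' = k := by
  obtain ⟨M₀, hM₀, hcardM⟩ := exists_subset_card_eq (min_le_left #M k)
  obtain ⟨Y₀, hY₀, hcardY⟩ := exists_subset_card_eq (s := Y) (n := k - min #M k) (by omega)
  have hsum : #M₀ + #Y₀ = k := by omega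
  obtain ⟨M', hM', hcard⟩ := exists_card_eq_add_of_le_degree hc Y₀ (hM.subset hM₀)
    (disjoint_of_subset_left hY₀ (hY.mono_right (biUnion_subset_biUnion_of_subset_left _ hM₀)))
    fun v hv => hsum ▸ hdeg v (hY₀ hv)
  exact ⟨M', hM', hcard.trans hsum⟩

end IsRainbowMatching

theorem exists_isRainbowMatching_forall_card_le [Fintype V] (G : SimpleGraph V)
    [DecidableRel G.Adj] (c : Sym2 V → β) :
    ∃ M, IsRainbowMatching G c M ∧ ∀ M', IsRainbowMatching G c M' → #M' ≤ #M := by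
  classical
  obtain ⟨M, hM, hmax⟩ :=
    exists_max_image {M ∈ G.edgeFinset.powerset | IsRainbowMatching G c M} card
      ⟨∅, mem_filter.2 ⟨empty_mem_powerset _, .empty⟩⟩
  refine ⟨M, (mem_filter.1 hM).2, fun M' hM' => hmax M' (mem_filter.2 ⟨?_, hM'⟩)⟩
  exact mem_powerset.2 fun e he => mem_edgeFinset.2 (hM'.subset_edgeSet he)

theorem IsRainbowMatching.two_mul_card_edgeFinset_le [Fintype V] [DecidableEq V] [DecidableEq β]
    {G : SimpleGraph V} [DecidableRel G.Adj] {c : Sym2 V → β} {M : Finset (Sym2 V)}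
    (hc : IsProperEdgeColoring G c) (hM : IsRainbowMatching G c M)
    (hmax : ∀ M', IsRainbowMatching G c M' → #M' ≤ #M) {Δ : ℕ}
    (hΔ : ∀ v, G.degree v ≤ Δ) :
    2 * #G.edgeFinset ≤ #M * (4 * Δ + Fintype.card V) := by
  set s := M.biUnion Sym2.toFinset
  have hsplit :
      #G.edgeFinset = #(G ⊓ coverGraph s).edgeFinset + #(G \ coverGraph s).edgeFinset := by
    rw [edgeFinset_inf, edgeFinset_sdiff, card_inter_add_card_sdiff]
  have hcovered : #(G ⊓ coverGraph s).edgeFinset ≤ #M * (2 * Δ) :=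
    calc #(G ⊓ coverGraph s).edgeFinset ≤ ∑ v ∈ s, G.degree v :=
          card_edgeFinset_inf_coverGraph_le G s
      _ ≤ #s * Δ := sum_le_card_nsmul s _ Δ fun v _ => hΔ v
      _ = #M * (2 * Δ) := by
          rw [card_biUnion_toFinset hM.subset_edgeSet hM.pairwiseDisjoint]; ring
  -- otherwise inserting `e` into `M` gives a larger rainbow matching
  have hrepeat : ∀ e ∈ (G \ coverGraph s).edgeSet, ∃ f ∈ M, c e = c f := by
    intro e he
    rw [edgeSet_sdiff] at he
    by_contra! hfresh
    have hfree : ∀ f ∈ M, Disjoint (e : Set V) f := fun f hf =>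
      Set.disjoint_left.2 fun v hve hvf =>
        he.2 ((mem_edgeSet_coverGraph (G.not_isDiag_of_mem_edgeSet he.1)).2
          ⟨v, hve, mem_biUnion.2 ⟨f, hf, Sym2.mem_toFinset.2 hvf⟩⟩)
    have := hmax _ (hM.insert he.1 hfree fun f hf h => hfresh f hf h.symm)
    rw [card_insert_of_notMem fun h => hfresh e h rfl] at this
    omega
  have hrest : 2 * #(G \ coverGraph s).edgeFinset ≤ #M * Fintype.card V :=
    calc 2 * #(G \ coverGraph s).edgeFinset
        ≤ 2 * #(M.biUnion fun f => {e ∈ G.edgeFinset | c e = c f}) := by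
          refine Nat.mul_le_mul_left 2 (card_le_card fun e he => ?_)
          have he' := mem_edgeFinset.1 he
          obtain ⟨f, hf, hcf⟩ := hrepeat e he'
          exact mem_biUnion.2
            ⟨f, hf, mem_filter.2 ⟨mem_edgeFinset.2 (edgeSet_mono sdiff_le he'), hcf⟩⟩
      _ ≤ ∑ f ∈ M, 2 * #{e ∈ G.edgeFinset | c e = c f} := by
          rw [← mul_sum]; exact Nat.mul_le_mul_left 2 card_biUnion_le
      _ ≤ ∑ _f ∈ M, Fintype.card V :=
          sum_le_sum fun f _ => hc.two_mul_card_colorClass_le (c f)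
      _ = #M * Fintype.card V := by rw [sum_const, smul_eq_mul]
  linarith

theorem choose_two_add_mul_le_of_add_lt {n k x t : ℕ} (hxt : x + t < k) (hn : 9 * k ^ 2 ≤ n) :
    2 * (x.choose 2 + x * (n - x)) + t * (4 * (3 * k) + n) ≤
      2 * ((k - 1).choose 2 + (k - 1) * (n - k + 1)) := by
  obtain ⟨a, rfl⟩ : ∃ a, k = a + 1 := ⟨k - 1, by omega⟩
  have hx : (x : ℤ) * ((x - 1 : ℕ) : ℤ) = x * (x - 1) := by cases x <;> simp
  have ha : (a : ℤ) * ((a - 1 : ℕ) : ℤ) = a * (a - 1) := by cases a <;> simp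
  rw [mul_add 2, mul_add 2, Nat.two_mul_choose_two, Nat.two_mul_choose_two, Nat.add_sub_cancel]
  zify [show x ≤ n by nlinarith, show a + 1 ≤ n by nlinarith]
  rw [hx, ha]
  have hn' : (9 : ℤ) * (a + 1) ^ 2 ≤ n := by exact_mod_cast hn
  have hd : (0 : ℤ) ≤ a - x - t := by omega
  have hslack : (0 : ℤ) ≤ 2 * n - a - x - 1 := by nlinarith
  rcases Nat.eq_zero_or_pos t with rfl | ht
  · push_cast at hd ⊢
    nlinarith [mul_nonneg hd hslack]
  · have : (0 : ℤ) ≤ n - 13 * a - 13 - x := by nlinarith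
    nlinarith [mul_nonneg hd hslack, mul_nonneg (Int.natCast_nonneg t) this]

theorem card_edgeFinset_le_of_not_hasRainbowCopy [Fintype V] {G : SimpleGraph V}
    [DecidableRel G.Adj] {c : Sym2 V → β} (hc : IsProperEdgeColoring G c) {k : ℕ}
    (hno : ¬ HasRainbowCopy (matchingGraph k) G c) (hn : 9 * k ^ 2 ≤ Fintype.card V) :
    #G.edgeFinset ≤ (k - 1).choose 2 + (k - 1) * (Fintype.card V - k + 1) := by
  classical
  set X : Finset V := {v | 3 * k ≤ G.degree v}
  set H := G \ coverGraph X
  have hHX : ∀ e ∈ H.edgeSet, ∀ v ∈ e, v ∉ X := fun e he v hve hvX => by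
    rw [edgeSet_sdiff] at he
    exact he.2 ((mem_edgeSet_coverGraph (G.not_isDiag_of_mem_edgeSet he.1)).2 ⟨v, hve, hvX⟩)
  have hΔ : ∀ v, H.degree v ≤ 3 * k := fun v => by
    by_cases hv : v ∈ X
    · rw [← card_neighborFinset_eq_degree, card_eq_zero.2]
      · exact Nat.zero_le _
      · exact eq_empty_of_forall_notMem fun w hw =>
          hHX _ ((mem_neighborFinset _ _ _).1 hw) v (Sym2.mem_mk_left v w) hv
    · exact (degree_le_of_le sdiff_le).trans (show G.degree v < 3 * k by simpa [X] using hv).le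
  obtain ⟨M, hM, hmax⟩ := exists_isRainbowMatching_forall_card_le H c
  -- greedily matching the high-degree vertices `X` to fresh neighbors extends `M`
  have hsmall : #X + #M < k := by
    by_contra! hk
    have hXM : Disjoint X (M.biUnion Sym2.toFinset) := disjoint_left.2 fun v hvX hvM => by
      obtain ⟨e, he, hve⟩ := mem_biUnion.1 hvM
      exact hHX e (hM.subset_edgeSet he) v (Sym2.mem_toFinset.1 hve) hvX
    obtain ⟨M', hM', hcard⟩ := (hM.mono sdiff_le).exists_card_eq_of_le_degree hc hXM
      (fun v hv => (mem_filter.1 hv).2) (by omega)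
    exact hno (hM'.hasRainbowCopy hcard)
  have hsplit : #G.edgeFinset = #(G ⊓ coverGraph X).edgeFinset + #H.edgeFinset := by
    rw [edgeFinset_inf, edgeFinset_sdiff, card_inter_add_card_sdiff]
  have hcovered : #(G ⊓ coverGraph X).edgeFinset ≤
      (#X).choose 2 + #X * (Fintype.card V - #X) :=
    (card_le_card (edgeFinset_mono inf_le_right)).trans (card_edgeFinset_coverGraph X).le
  have hrest : 2 * #H.edgeFinset ≤ #M * (4 * (3 * k) + Fintype.card V) := by
    convert hM.two_mul_card_edgeFinset_le (hc.mono sdiff_le) hmax hΔ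
  have := choose_two_add_mul_le_of_add_lt hsmall hn
  omega

theorem mem_rainbowExSet_matchingGraph {n k : ℕ} (hk : 0 < k) (hkn : k ≤ n) :
    (k - 1).choose 2 + (k - 1) * (n - k + 1) ∈ rainbowExSet n (matchingGraph k) := by
  obtain ⟨s, -, hs⟩ := exists_subset_card_eq (s := (univ : Finset (Fin n))) (n := k - 1)
    (by simp only [card_univ, Fintype.card_fin]; omega)
  refine ⟨coverGraph s, fun e => Fintype.equivFin _ e, ?_, ?_, ?_⟩
  · exact fun e₁ e₂ _ _ hne _ h => hne ((Fintype.equivFin _).injective (Fin.ext h))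
  · rintro ⟨f, hf, -⟩
    have := (isVertexCover_coverGraph s).le_card_of_contains_matchingGraph ⟨f, hf⟩
    omega
  · rw [← coe_edgeFinset, Set.ncard_coe_finset, card_edgeFinset_coverGraph, hs, Fintype.card_fin]
    congr 2
    omega

/-- For `k ≥ 1` and `n ≥ 9k²`, `ex*(n, M_k) = C(k-1,2) + (k-1)(n-k+1)`. -/
theorem rainbowTuran_matching (k : ℕ) (hk : 0 < k) (n : ℕ) (hn : 9 * k ^ 2 ≤ n) :
    IsGreatest (rainbowExSet n (matchingGraph k))
      (Nat.choose (k - 1) 2 + (k - 1) * (n - k + 1)) := by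
  refine ⟨mem_rainbowExSet_matchingGraph hk (by nlinarith), ?_⟩
  rintro m ⟨G, c, hc, hno, rfl⟩
  classical
  rw [← coe_edgeFinset, Set.ncard_coe_finset]
  simpa using card_edgeFinset_le_of_not_hasRainbowCopy hc hno (by simpa using hn)
end

section
/- Let G be a graph equipped with an arbitrary (not necessarily proper) edge-coloring, and suppose every vertex of G is incident to edges of at least θ distinct colors. Then G contains a rainbow path whose number of edges l satisfies 3l ≥ 2θ (that is, a rainbow path of length at least (2/3)θ). -/
open SimpleGraph Finset

/-!
Take a longest rainbow path `p` from `s` to `t`, with `n` edges and set of colours `C`. A colour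
at `s` outside `C` sits on an edge `sw` with `w` on `p`, since otherwise `p` extends; exchanging
the edge `uw` of `p` entering `w` for `sw` yields a longest rainbow path from `u` to `t` that
misses the colour of `uw`. At `t` at most `n` colours come from edges back into `p`; any other
colour sits on an edge `tx` with `x` off `p`, so by maximality it lies in `C` and, applied to the
rotated paths, differs from each colour of such an edge `uw`. As these colours of edges `uw` are
pairwise distinct, the new colours at `s` and the outer colours at `t` inject disjointly into `C`,
whence `2θ ≤ (n + #new) + (n + #outer) ≤ 3n`.
-/

theorem List.nodup_reverse_append_cons {α : Type*} {l₁ l₂ : List α} {x y : α}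
    (h : (l₁ ++ x :: l₂).Nodup) (hy : y ∉ l₁ ++ x :: l₂) :
    (l₁.reverse ++ y :: l₂).Nodup ∧ x ∉ l₁.reverse ++ y :: l₂ := by
  simp only [List.nodup_append, List.nodup_cons, List.mem_append, List.mem_cons, List.mem_reverse,
    List.nodup_reverse] at h hy ⊢
  grind

theorem List.ncard_setOf_mem_le {α : Type*} (l : List α) : {a | a ∈ l}.ncard ≤ l.length := by
  classical
  rw [← List.coe_toFinset, Set.ncard_coe_finset]
  exact l.toFinset_card_le

theorem List.Nodup.ncard_setOf_mem {α : Type*} {l : List α} (h : l.Nodup) :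
    {a | a ∈ l}.ncard = l.length := by
  classical
  rw [← List.coe_toFinset, Set.ncard_coe_finset, List.toFinset_card_of_nodup h]

theorem SimpleGraph.exists_adj_of_mem_incidenceSet {V : Type*} {G : SimpleGraph V} {v : V}
    {e : Sym2 V} (he : e ∈ G.incidenceSet v) : ∃ w, G.Adj v w ∧ s(v, w) = e := by
  obtain ⟨w, rfl⟩ := Sym2.mem_iff_exists.1 he.2
  exact ⟨w, (G.mem_incidenceSet v w).1 he, rfl⟩

namespace SimpleGraph.Walk

variable {V β : Type*} {G : SimpleGraph V} {c : Sym2 V → β}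

def IsRainbow (c : Sym2 V → β) {u v : V} (p : G.Walk u v) : Prop :=
  (p.edges.map c).Nodup

structure IsLongestRainbowPath (c : Sym2 V → β) {u v : V} (p : G.Walk u v) : Prop where
  isPath : p.IsPath
  isRainbow : p.IsRainbow c
  length_le ⦃a b : V⦄ (q : G.Walk a b) : q.IsPath → q.IsRainbow c → q.length ≤ p.length

theorem exists_eq_append_cons_of_mem_darts {u v : V} {p : G.Walk u v} {d : G.Dart}
    (hd : d ∈ p.darts) :
    ∃ (A : G.Walk u d.fst) (B : G.Walk d.snd v), p = A.append (cons d.adj B) := by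
  obtain ⟨A, B, rfl⟩ := (isSubwalk_toWalk_adj_iff_mem_darts p).2 hd
  exact ⟨A, B, by rw [← append_assoc]; rfl⟩

theorem exists_isLongestRainbowPath [Nonempty V] (c : Sym2 V → β) {N : ℕ}
    (hN : ∀ ⦃a b : V⦄ (q : G.Walk a b), q.IsPath → q.IsRainbow c → q.length ≤ N) :
    ∃ (u v : V) (p : G.Walk u v), p.IsLongestRainbowPath c := by
  classical
  let P : ℕ → Prop := fun n =>
    ∃ (u v : V) (p : G.Walk u v), p.IsPath ∧ p.IsRainbow c ∧ p.length = n
  have hP0 : P 0 := by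
    inhabit V
    exact ⟨default, default, nil, .nil, List.nodup_nil, rfl⟩
  obtain ⟨u, v, p, hp, hr, hlen⟩ : P (Nat.findGreatest P N) :=
    Nat.findGreatest_spec (Nat.zero_le N) hP0
  exact ⟨u, v, p, hp, hr, fun a b q hq hrq =>
    hlen ▸ Nat.le_findGreatest (hN q hq hrq) ⟨a, b, q, hq, hrq, rfl⟩⟩

namespace IsLongestRainbowPath

variable {s t : V} {p : G.Walk s t}

theorem of_length_eq (hp : p.IsLongestRainbowPath c) {u v : V} {q : G.Walk u v}
    (hq : q.IsPath) (hrq : q.IsRainbow c) (hlen : q.length = p.length) :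
    q.IsLongestRainbowPath c :=
  ⟨hq, hrq, hlen ▸ hp.length_le⟩

theorem reverse (hp : p.IsLongestRainbowPath c) : p.reverse.IsLongestRainbowPath c :=
  hp.of_length_eq hp.isPath.reverse (by simpa [IsRainbow, List.map_reverse] using hp.isRainbow)
    p.length_reverse

theorem color_mem_of_adj_start (hp : p.IsLongestRainbowPath c) {x : V} (h : G.Adj x s)
    (hx : x ∉ p.support) : c s(x, s) ∈ p.edges.map c := by
  by_contra hc
  have := hp.length_le (cons h p) (hp.isPath.cons hx) (List.nodup_cons.2 ⟨hc, hp.isRainbow⟩)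
  simp at this

theorem color_mem_of_adj_end (hp : p.IsLongestRainbowPath c) {x : V} (h : G.Adj t x)
    (hx : x ∉ p.support) : c s(t, x) ∈ p.edges.map c := by
  simpa [Sym2.eq_swap] using hp.reverse.color_mem_of_adj_start h.symm (by simpa using hx)

theorem rotate {u w : V} {A : G.Walk s u} {B : G.Walk w t} {huw : G.Adj u w}
    (hp : (A.append (cons huw B)).IsLongestRainbowPath c) (hsw : G.Adj s w)
    (hnew : c s(s, w) ∉ (A.append (cons huw B)).edges.map c) :
    (A.reverse.append (cons hsw B)).IsLongestRainbowPath c ∧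
      c s(u, w) ∉ (A.reverse.append (cons hsw B)).edges.map c := by
  have hsupp : (A.reverse.append (cons hsw B)).support.Perm (A.append (cons huw B)).support := by
    simpa [support_append] using (List.reverse_perm _).append_right _
  have hpath := (isPath_def _).2 (hsupp.nodup_iff.2 hp.isPath.support_nodup)
  have hr := hp.isRainbow
  simp only [IsRainbow, edges_append, edges_cons, List.map_append, List.map_cons] at hr hnew
  obtain ⟨hrq, hdq⟩ := List.nodup_reverse_append_cons hr hnew
  refine ⟨hp.of_length_eq hpath ?_ (by simp), ?_⟩ <;>
    simpa only [IsRainbow, edges_append, edges_cons, edges_reverse, List.map_append, List.map_cons,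
      List.map_reverse]

theorem color_edge_ne_of_mem_darts (hp : p.IsLongestRainbowPath c) {d : G.Dart}
    (hd : d ∈ p.darts) (hsd : G.Adj s d.snd) (hnew : c s(s, d.snd) ∉ p.edges.map c) {x : V}
    (htx : G.Adj t x) (hx : x ∉ p.support) : c s(t, x) ≠ c d.edge := by
  obtain ⟨A, B, rfl⟩ := exists_eq_append_cons_of_mem_darts hd
  obtain ⟨hq, hdq⟩ := hp.rotate hsd hnew
  have hxq : x ∉ (A.reverse.append (cons hsd B)).support := by
    simpa [support_append] using hx
  exact fun h => hdq (h ▸ hq.color_mem_of_adj_end htx hxq)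

theorem ncard_colors_start_sdiff_le (hp : p.IsLongestRainbowPath c) {O : Set β}
    (hO : ∀ b ∈ O, ∃ x, G.Adj t x ∧ x ∉ p.support ∧ c s(t, x) = b) :
    (c '' G.incidenceSet s \ {a | a ∈ p.edges.map c}).ncard ≤
      ({a | a ∈ p.edges.map c} \ O).ncard := by
  set C : Set β := {a | a ∈ p.edges.map c}
  set D : Set G.Dart := {d | d ∈ p.darts ∧ G.Adj s d.snd ∧ c s(s, d.snd) ∉ C}
  have hDfin : D.Finite := p.darts.finite_toSet.subset fun d hd => hd.1
  have hcover : c '' G.incidenceSet s \ C ⊆ (fun d => c s(s, d.snd)) '' D := by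
    rintro a ⟨⟨e, he, rfl⟩, hnew⟩
    obtain ⟨w, hsw, rfl⟩ := exists_adj_of_mem_incidenceSet he
    have hw : w ∈ p.support := by
      by_contra hw
      exact hnew (Sym2.eq_swap ▸ hp.color_mem_of_adj_start hsw.symm hw)
    rw [← cons_tail_support, List.mem_cons, or_iff_right hsw.ne', ← map_snd_darts] at hw
    obtain ⟨d, hd, rfl⟩ := List.mem_map.1 hw
    exact ⟨d, ⟨hd, hsw, hnew⟩, rfl⟩
  have hinj : Set.InjOn (fun d => c d.edge) D := by
    have hnd : (p.darts.map fun d => c d.edge).Nodup := by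
      simpa only [IsRainbow, edges, List.map_map, Function.comp_def] using hp.isRainbow
    exact fun d₁ hd₁ d₂ hd₂ => List.inj_on_of_nodup_map hnd hd₁.1 hd₂.1
  have hmaps : ∀ d ∈ D, c d.edge ∈ C \ O := by
    rintro d ⟨hd, hsd, hnew⟩
    refine ⟨List.mem_map_of_mem (List.mem_map_of_mem hd), fun hO' => ?_⟩
    obtain ⟨x, htx, hx, hcx⟩ := hO _ hO'
    exact hp.color_edge_ne_of_mem_darts hd hsd hnew htx hx hcx
  calc (c '' G.incidenceSet s \ C).ncard ≤ ((fun d => c s(s, d.snd)) '' D).ncard :=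
        Set.ncard_le_ncard hcover (hDfin.image _)
    _ ≤ D.ncard := Set.ncard_image_le hDfin
    _ ≤ (C \ O).ncard :=
        Set.ncard_le_ncard_of_injOn _ hmaps hinj ((p.edges.map c).finite_toSet.sdiff)

theorem ncard_colors_start_add_ncard_colors_end_le (hp : p.IsLongestRainbowPath c) :
    (c '' G.incidenceSet s).ncard + (c '' G.incidenceSet t).ncard ≤ 3 * p.length := by
  set C : Set β := {a | a ∈ p.edges.map c}
  set I : Set β := {a | a ∈ p.reverse.support.tail.map fun x => c s(t, x)}
  set O := c '' G.incidenceSet t \ I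
  have hO : ∀ b ∈ O, ∃ x, G.Adj t x ∧ x ∉ p.support ∧ c s(t, x) = b := by
    rintro b ⟨⟨e, he, rfl⟩, hb⟩
    obtain ⟨x, htx, rfl⟩ := exists_adj_of_mem_incidenceSet he
    refine ⟨x, htx, fun hx => hb (List.mem_map_of_mem (f := fun x => c s(t, x)) ?_), rfl⟩
    replace hx : x ∈ p.reverse.support := by simpa using hx
    rw [← cons_tail_support, List.mem_cons] at hx
    exact hx.resolve_left htx.ne'
  have hOC : O ⊆ C := fun b hb => by
    obtain ⟨x, htx, hx, rfl⟩ := hO b hb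
    exact hp.color_mem_of_adj_end htx hx
  have hC : C.ncard = p.length := by
    rw [hp.isRainbow.ncard_setOf_mem, List.length_map, length_edges]
  have hI : I.ncard ≤ p.length := by
    refine (List.ncard_setOf_mem_le _).trans ?_
    simp
  have hCfin : C.Finite := List.finite_toSet _
  have hnew : (c '' G.incidenceSet s \ C).ncard ≤ (C \ O).ncard :=
    hp.ncard_colors_start_sdiff_le hO
  have hs : (c '' G.incidenceSet s).ncard ≤ (c '' G.incidenceSet s \ C).ncard + C.ncard :=
    Set.ncard_le_ncard_sdiff_add_ncard _ _ hCfin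
  have ht : (c '' G.incidenceSet t).ncard ≤ O.ncard + I.ncard :=
    Set.ncard_le_ncard_sdiff_add_ncard _ _ (List.finite_toSet _)
  have hsplit : (C \ O).ncard + O.ncard = C.ncard := Set.ncard_sdiff_add_ncard_of_subset hOC hCfin
  omega

end IsLongestRainbowPath
end SimpleGraph.Walk

theorem rainbow_path_color_degree_general {V β : Type*} [Nonempty V]
    (G : SimpleGraph V) (c : Sym2 V → β) (θ : ℕ)
    (hθ : ∀ v, θ ≤ (c '' G.incidenceSet v).ncard) :
    ∃ (u v : V) (p : G.Walk u v), p.IsPath ∧ (p.edges.map c).Nodup ∧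
      2 * θ ≤ 3 * p.length := by
  by_cases hlong : ∃ (u v : V) (p : G.Walk u v), p.IsPath ∧ p.IsRainbow c ∧ θ ≤ p.length
  · obtain ⟨u, v, p, hp, hr, hθp⟩ := hlong
    exact ⟨u, v, p, hp, hr, by omega⟩
  push Not at hlong
  obtain ⟨u, v, p, hp⟩ :=
    Walk.exists_isLongestRainbowPath c fun a b q hq hrq => (hlong a b q hq hrq).le
  have hcolors := hp.ncard_colors_start_add_ncard_colors_end_le
  exact ⟨u, v, p, hp.isPath, hp.isRainbow, by linarith [hθ u, hθ v]⟩

/-- Babu–Chandran–Rajendraprasad: if `G` carries an arbitrary edge-coloring in which every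
vertex is incident to at least `θ` distinct colors, then `G` contains a rainbow path
of length at least `(2/3)θ`, i.e. a rainbow path with `l` edges where `3l ≥ 2θ`. -/
theorem rainbow_path_color_degree {V β : Type*} [Fintype V] [Nonempty V]
    (G : SimpleGraph V) (c : Sym2 V → β) (θ : ℕ)
    (hθ : ∀ v, θ ≤ (c '' G.incidenceSet v).ncard) :
    ∃ (u v : V) (p : G.Walk u v), p.IsPath ∧ (p.edges.map c).Nodup ∧
      2 * θ ≤ 3 * p.length :=
  rainbow_path_color_degree_general G c θ hθ
end

section
/- If n is divisible by 4, then ex*(n, P_3) = 3n/2; that is, the maximum number of edges in an n-vertex graph admitting a proper edge-coloring with no rainbow path of 3 edges equals 3n/2, achieved by a disjoint union of n/4 properly 3-edge-colored copies of K_4. -/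
open SimpleGraph Finset

/-!
In a proper coloring with no rainbow `P₃`, the two end edges of every path `a - b - d - e` have
the same color. Let `v` have degree at least `4` and `u` be a neighbour of `v`. Any `x ≠ v`
adjacent to `u` gives paths `x - u - v - z` for at least two neighbours `z` of `v`, hence two
edges at `v` of color `c(ux)`; so `u` is a leaf. The vertices of degree at least `4` are thus
centres of vertex-disjoint stars, a star with `d` leaves contributes `2d ≤ 3(d + 1)` to the degree
sum, every other vertex contributes at most `3`, and `2|E| ≤ 3n`.

Conversely, take `n / 4` disjoint copies of `K₄` on the blocks `{4k, …, 4k + 3}` and color the edge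
`ab` by `(a mod 4) xor (b mod 4)`: the coloring is proper, and the end edges of a path through all
four vertices of a block get the same color.
-/

namespace SimpleGraph

variable {V : Type*} (G : SimpleGraph V)

lemma two_mul_ncard_edgeSet [Fintype V] [DecidableRel G.Adj] :
    2 * G.edgeSet.ncard = ∑ v, G.degree v := by
  rw [← coe_edgeFinset, Set.ncard_coe_finset, sum_degrees_eq_twice_card_edges]

lemma exists_ne_adj_notMem_of_card_add_two_le_degree [DecidableEq V] {v : V}
    [Fintype (G.neighborSet v)] (T : Finset V) (hT : #T + 2 ≤ G.degree v) :
    ∃ z₁ z₂, z₁ ≠ z₂ ∧ G.Adj v z₁ ∧ G.Adj v z₂ ∧ z₁ ∉ T ∧ z₂ ∉ T := by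
  have : 1 < #(G.neighborFinset v \ T) := by
    have := le_card_sdiff T (G.neighborFinset v)
    rw [card_neighborFinset_eq_degree] at this
    omega
  obtain ⟨z₁, hz₁, z₂, hz₂, hne⟩ := one_lt_card.mp this
  simp only [mem_sdiff, mem_neighborFinset] at hz₁ hz₂
  exact ⟨z₁, z₂, hne, hz₁.1, hz₂.1, hz₁.2, hz₂.2⟩

lemma pathGraph_four_edgeSet : (pathGraph 4).edgeSet = {s(0, 1), s(1, 2), s(2, 3)} := by
  ext e
  induction e using Sym2.ind with | _ x y =>
  simp only [mem_edgeSet, pathGraph_adj, Set.mem_insert_iff, Set.mem_singleton_iff, Sym2.eq_iff]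
  revert x y; decide

end SimpleGraph

section

variable {V β : Type*} {G : SimpleGraph V} {c : Sym2 V → β}

lemma isProperEdgeColoring_iff : IsProperEdgeColoring G c ↔
    ∀ ⦃u v w⦄, G.Adj u v → G.Adj u w → v ≠ w → c s(u, v) ≠ c s(u, w) := by
  refine ⟨fun hc u v w huv huw hvw =>
    hc huv huw (mt Sym2.congr_right.mp hvw) ⟨u, by simp, by simp⟩, ?_⟩
  rintro hc e₁ e₂ he₁ he₂ hne ⟨u, hu₁, hu₂⟩
  obtain ⟨v, rfl⟩ := Sym2.mem_iff_exists.mp hu₁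
  obtain ⟨w, rfl⟩ := Sym2.mem_iff_exists.mp hu₂
  exact hc he₁ he₂ (by rintro rfl; exact hne rfl)

lemma not_hasRainbowCopy_pathGraph_four_iff (hc : IsProperEdgeColoring G c) :
    ¬ HasRainbowCopy (pathGraph 4) G c ↔
      ∀ ⦃a b d e⦄, G.Adj a b → G.Adj b d → G.Adj d e → a ≠ d → a ≠ e → b ≠ e →
        c s(a, b) = c s(d, e) := by
  constructor
  · intro hr a b d e hab hbd hde had hae hbe
    by_contra hne
    have h₁₂ : c s(a, b) ≠ c s(b, d) := by
      simpa [Sym2.eq_swap] using isProperEdgeColoring_iff.mp hc hab.symm hbd had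
    have h₂₃ : c s(b, d) ≠ c s(d, e) := by
      simpa [Sym2.eq_swap] using isProperEdgeColoring_iff.mp hc hbd.symm hde hbe
    refine hr ⟨⟨![a, b, d, e], ?_⟩, ?_, ?_⟩
    · have := hab.ne; have := hbd.ne; have := hde.ne
      intro i j hij
      fin_cases i <;> fin_cases j <;> simp_all [eq_comm]
    · intro i j hij
      rw [pathGraph_adj] at hij
      fin_cases i <;> fin_cases j <;> simp at hij <;>
        first | exact hab | exact hab.symm | exact hbd | exact hbd.symm | exact hde | exact hde.symm
    · intro e₁ he₁ e₂ he₂ hce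
      rw [pathGraph_four_edgeSet] at he₁ he₂
      rcases he₁ with rfl | rfl | rfl <;> rcases he₂ with rfl | rfl | rfl <;>
        first | rfl | exact absurd hce h₁₂ | exact absurd hce h₁₂.symm | exact absurd hce h₂₃ |
          exact absurd hce h₂₃.symm | exact absurd hce hne | exact absurd hce (Ne.symm hne)
  · rintro hpath ⟨f, hf, hrb⟩
    have hadj (i : Fin 3) : G.Adj (f i.castSucc) (f i.succ) := hf (by simp [pathGraph_adj])
    have := hrb s(0, 1) (by simp [pathGraph_adj]) s(2, 3) (by simp [pathGraph_adj])
      (hpath (hadj 0) (hadj 1) (hadj 2) (by simp) (by simp) (by simp))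
    simp at this

namespace IsProperEdgeColoring

lemma eq_of_adj_of_adj_of_four_le_degree (hc : IsProperEdgeColoring G c)
    (hr : ¬ HasRainbowCopy (pathGraph 4) G c) {v u x : V} [Fintype (G.neighborSet v)]
    (hv : 4 ≤ G.degree v) (hvu : G.Adj v u) (hux : G.Adj u x) : x = v := by
  classical
  by_contra hxv
  have hpath := (not_hasRainbowCopy_pathGraph_four_iff hc).mp hr
  obtain ⟨z₁, z₂, hz, hz₁, hz₂, hz₁T, hz₂T⟩ :=
    G.exists_ne_adj_notMem_of_card_add_two_le_degree {u, x} (by grw [card_le_two]; exact hv)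
  simp only [mem_insert, mem_singleton, not_or] at hz₁T hz₂T
  have h₁ := hpath hux.symm hvu.symm hz₁ hxv (Ne.symm hz₁T.2) (Ne.symm hz₁T.1)
  have h₂ := hpath hux.symm hvu.symm hz₂ hxv (Ne.symm hz₂T.2) (Ne.symm hz₂T.1)
  exact isProperEdgeColoring_iff.mp hc hz₁ hz₂ hz (h₁.symm.trans h₂)

lemma neighborFinset_eq_singleton_of_four_le_degree (hc : IsProperEdgeColoring G c)
    (hr : ¬ HasRainbowCopy (pathGraph 4) G c) {v u : V}
    [Fintype (G.neighborSet v)] [Fintype (G.neighborSet u)]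
    (hv : 4 ≤ G.degree v) (hvu : G.Adj v u) : G.neighborFinset u = {v} := by
  ext x
  simp only [mem_neighborFinset, mem_singleton]
  exact ⟨hc.eq_of_adj_of_adj_of_four_le_degree hr hv hvu, fun h => h ▸ hvu.symm⟩

theorem two_mul_ncard_edgeSet_le (hc : IsProperEdgeColoring G c)
    (hr : ¬ HasRainbowCopy (pathGraph 4) G c) [Fintype V] :
    2 * G.edgeSet.ncard ≤ 3 * Fintype.card V := by
  classical
  set S := univ.filter fun v => 4 ≤ G.degree v
  set L := S.biUnion fun s => G.neighborFinset s
  have hleaf {s u} (hs : s ∈ S) (hsu : u ∈ G.neighborFinset s) : G.neighborFinset u = {s} :=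
    hc.neighborFinset_eq_singleton_of_four_le_degree hr (mem_filter.mp hs).2
      ((G.mem_neighborFinset _ _).mp hsu)
  have hLdeg {u} (hu : u ∈ L) : G.degree u = 1 := by
    obtain ⟨s, hs, hsu⟩ := mem_biUnion.mp hu
    rw [← G.card_neighborFinset_eq_degree, hleaf hs hsu, card_singleton]
  have hdisj : (S : Set V).PairwiseDisjoint fun s => G.neighborFinset s := fun s hs t ht hst =>
    disjoint_left.mpr fun u hus hut =>
      hst (singleton_injective ((hleaf hs hus).symm.trans (hleaf ht hut)))
  have hLS : Disjoint S L := disjoint_left.mpr fun v hvS hvL => by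
    have := (mem_filter.mp hvS).2
    rw [hLdeg hvL] at this
    omega
  have hcardL : #L = ∑ s ∈ S, G.degree s := by
    simp only [L, card_biUnion hdisj, card_neighborFinset_eq_degree]
  have hsumL : ∑ v ∈ L, G.degree v = #L := by
    rw [sum_congr rfl fun _ => hLdeg, sum_const, smul_eq_mul, mul_one]
  have hsumR : ∑ v ∈ (S ∪ L)ᶜ, G.degree v ≤ 3 * #(S ∪ L)ᶜ := by
    rw [mul_comm]
    refine sum_le_card_nsmul _ _ _ fun v hv => ?_
    simp only [mem_compl, mem_union, not_or, S, mem_filter, mem_univ, true_and] at hv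
    omega
  have hcardR : #(S ∪ L)ᶜ = Fintype.card V - (#S + #L) := by
    rw [card_compl, card_union_of_disjoint hLS]
  have hcardSL : #S + #L ≤ Fintype.card V := by
    rw [← card_union_of_disjoint hLS]; exact card_le_univ _
  rw [G.two_mul_ncard_edgeSet, ← sum_add_sum_compl (S ∪ L), sum_union hLS]
  omega

end IsProperEdgeColoring

end

lemma Nat.xor_eq_xor_of_pairwise_ne_of_lt_four {p q r t : ℕ} (hp : p < 4) (hq : q < 4)
    (hr : r < 4) (ht : t < 4) (hpq : p ≠ q) (hpr : p ≠ r) (hpt : p ≠ t) (hqr : q ≠ r)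
    (hqt : q ≠ t) (hrt : r ≠ t) : p ^^^ q = r ^^^ t := by
  interval_cases p <;> interval_cases q <;> interval_cases r <;> interval_cases t <;>
    first | rfl | omega

def k4Blocks (n : ℕ) : SimpleGraph (Fin n) where
  Adj a b := a ≠ b ∧ (a : ℕ) / 4 = (b : ℕ) / 4
  symm := ⟨fun _ _ h => ⟨h.1.symm, h.2.symm⟩⟩
  loopless := ⟨fun _ h => h.1 rfl⟩

instance (n : ℕ) : DecidableRel (k4Blocks n).Adj := fun _ _ => instDecidableAnd

def k4BlocksColoring (n : ℕ) : Sym2 (Fin n) → ℕ :=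
  Sym2.lift ⟨fun a b => (a : ℕ) % 4 ^^^ (b : ℕ) % 4, fun _ _ => Nat.xor_comm _ _⟩

namespace k4Blocks

variable {n : ℕ}

lemma adj_iff {a b : Fin n} : (k4Blocks n).Adj a b ↔ a ≠ b ∧ (a : ℕ) / 4 = (b : ℕ) / 4 := Iff.rfl

lemma mod_four_ne {a b : Fin n} (h : (k4Blocks n).Adj a b) : (a : ℕ) % 4 ≠ (b : ℕ) % 4 := by
  have := Fin.val_ne_of_ne h.1
  have := h.2
  omega

lemma isProperEdgeColoring : IsProperEdgeColoring (k4Blocks n) (k4BlocksColoring n) := by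
  refine isProperEdgeColoring_iff.mpr fun u v w huv huw hvw hc => ?_
  have hmod : (v : ℕ) % 4 = (w : ℕ) % 4 := Nat.xor_right_inj.mp hc
  have hdiv : (v : ℕ) / 4 = (w : ℕ) / 4 := huv.2.symm.trans huw.2
  exact hvw (Fin.ext (by omega))

lemma not_hasRainbowCopy_pathGraph_four :
    ¬ HasRainbowCopy (pathGraph 4) (k4Blocks n) (k4BlocksColoring n) := by
  refine (not_hasRainbowCopy_pathGraph_four_iff isProperEdgeColoring).mpr
    fun a b d e hab hbd hde had hae hbe => ?_
  have hres {x y : Fin n} (hxy : (x : ℕ) / 4 = (y : ℕ) / 4) (hne : x ≠ y) :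
      (x : ℕ) % 4 ≠ (y : ℕ) % 4 := mod_four_ne ⟨hne, hxy⟩
  exact Nat.xor_eq_xor_of_pairwise_ne_of_lt_four (Nat.mod_lt _ four_pos) (Nat.mod_lt _ four_pos)
    (Nat.mod_lt _ four_pos) (Nat.mod_lt _ four_pos) (mod_four_ne hab)
    (hres (hab.2.trans hbd.2) had) (hres (hab.2.trans (hbd.2.trans hde.2)) hae)
    (mod_four_ne hbd) (hres (hbd.2.trans hde.2) hbe) (mod_four_ne hde)

lemma degree_eq_three (hn : 4 ∣ n) (v : Fin n) : (k4Blocks n).degree v = 3 := by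
  have hblock : ((k4Blocks n).neighborFinset v).map Fin.valEmbedding =
      (Ico (4 * (v / 4 : ℕ)) (4 * (v / 4 : ℕ) + 4)).erase (v : ℕ) := by
    ext m
    simp only [mem_map, mem_neighborFinset, adj_iff, Fin.valEmbedding_apply, mem_erase, mem_Ico]
    constructor
    · rintro ⟨b, ⟨hvb, hdiv⟩, rfl⟩
      have := Fin.val_ne_of_ne hvb
      omega
    · rintro ⟨hmv, hlo, hhi⟩
      obtain ⟨k, rfl⟩ := hn
      exact ⟨⟨m, by omega⟩, ⟨fun h => hmv (congrArg Fin.val h).symm, by simp; omega⟩, rfl⟩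
  rw [← card_neighborFinset_eq_degree, ← card_map, hblock,
    card_erase_of_mem (by simp; omega), Nat.card_Ico]
  omega

lemma two_mul_ncard_edgeSet (hn : 4 ∣ n) : 2 * (k4Blocks n).edgeSet.ncard = 3 * n := by
  simp [SimpleGraph.two_mul_ncard_edgeSet, degree_eq_three hn, mul_comm]

end k4Blocks

/-- If `4 ∣ n` then `ex*(n, P_3) = 3n/2`, achieved by `n/4` disjoint properly
`3`-edge-colored copies of `K_4`. -/
theorem rainbowTuran_P3 (n : ℕ) (hn : 4 ∣ n) :
    IsGreatest (rainbowExSet n (pathGraph 4)) (3 * n / 2) := by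
  refine ⟨⟨k4Blocks n, k4BlocksColoring n, k4Blocks.isProperEdgeColoring,
    k4Blocks.not_hasRainbowCopy_pathGraph_four, ?_⟩, ?_⟩
  · have := k4Blocks.two_mul_ncard_edgeSet hn
    omega
  · rintro m ⟨G, c, hc, hr, rfl⟩
    have := hc.two_mul_ncard_edgeSet_le hr
    rw [Fintype.card_fin] at this
    omega
end
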